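/- In 2-dimensional Minkowski space, the Lorentzian distance between points p ≼ q (q in the causal future of p) satisfies d(p,q) ≤ [f(q) − f(p)]⁺ for every C¹ function f with g(∇f,∇f) ≤ −1 and ∇f past-directed, where [α]⁺ = max(0,α). -/

import Mathlib

/-- The Minkowski bilinear form of signature `(-,+,...,+)` on `Fin n → ℝ`. -/
def mink {n : ℕ} (v w : Fin n → ℝ) : ℝ :=
  ∑ i : Fin n, (if i.val = 0 then (-1 : ℝ) else 1) * v i * w i

/-- The partial derivative `∂ᵢ f` at `x`. -/
noncomputable def pd {n : ℕ} (f : (Fin n → ℝ) → ℝ) (i : Fin n) (x : Fin n → ℝ) : ℝ :=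
  fderiv ℝ f x (Pi.single i 1)

/-- The Lorentzian (Minkowski) gradient `∇f = (−∂₀f, ∂₁f, …, ∂_{n−1}f)`. -/
noncomputable def mgrad {n : ℕ} (f : (Fin n → ℝ) → ℝ) (x : Fin n → ℝ) : Fin n → ℝ :=
  fun i => (if i.val = 0 then (-1 : ℝ) else 1) * pd f i x

/-- The Lorentzian length of a curve on `[0,1]` with derivative `γ'`. -/
noncomputable def plen (γ' : ℝ → (Fin 2 → ℝ)) : ℝ :=
  ∫ s in (0 : ℝ)..1, Real.sqrt (-(mink (γ' s) (γ' s)))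

/-- `γ` is a piecewise `C¹` future-directed causal curve from `p` to `q`
in the Minkowski plane, with derivative `γ'`. -/
def IsCausalCurve (γ γ' : ℝ → (Fin 2 → ℝ)) (p q : Fin 2 → ℝ) : Prop :=
  γ 0 = p ∧ γ 1 = q ∧ ContinuousOn γ (Set.Icc 0 1) ∧
  (∃ (k : ℕ) (t : Fin (k + 1) → ℝ), StrictMono t ∧ t 0 = 0 ∧ t (Fin.last k) = 1 ∧
    ∀ i : Fin k, (∀ s ∈ Set.Ioo (t i.castSucc) (t i.succ), HasDerivAt γ (γ' s) s) ∧
      ContinuousOn γ' (Set.Icc (t i.castSucc) (t i.succ))) ∧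
  (∀ᵐ s ∂(MeasureTheory.volume.restrict (Set.Icc (0 : ℝ) 1)),
    mink (γ' s) (γ' s) ≤ 0 ∧ 0 ≤ γ' s 0)

/-- The Lorentzian distance in the Minkowski plane: the supremum of the Lorentzian
lengths of piecewise `C¹` future-directed causal curves from `p` to `q`
(and `0` if no such curve exists). -/
noncomputable def ldist (p q : Fin 2 → ℝ) : ℝ :=
  sSup (insert 0 {L | ∃ γ γ', IsCausalCurve γ γ' p q ∧ L = plen γ'})

/-!
Along a future-directed causal vector `u`, the reverse Cauchy–Schwarz inequality of the
Minkowski plane bounds the proper length `√(-⟨u,u⟩)` by `⟨∇f, u⟩ = df(u)` when `∇f` is past-directed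
with `⟨∇f,∇f⟩ ≤ -1`. Integrating along each `C¹` piece of a causal curve from `p` to `q` and using the
fundamental theorem of calculus, its Lorentzian length is at most `f q - f p`.
-/

open MeasureTheory Set

lemma mink_two (v w : Fin 2 → ℝ) : mink v w = -(v 0 * w 0) + v 1 * w 1 := by
  simp [mink, Fin.sum_univ_two]

lemma continuous_mink_self {n : ℕ} : Continuous fun v : Fin n → ℝ => mink v v := by
  unfold mink; fun_prop

lemma fderiv_apply_eq_sum_pd {n : ℕ} (f : (Fin n → ℝ) → ℝ) (x v : Fin n → ℝ) :
    fderiv ℝ f x v = ∑ i, v i * pd f i x := by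
  conv_lhs => rw [pi_eq_sum_univ' v]
  simp [pd, map_sum, map_smul]

lemma mink_mgrad_eq_fderiv {n : ℕ} (f : (Fin n → ℝ) → ℝ) (x v : Fin n → ℝ) :
    mink (mgrad f x) v = fderiv ℝ f x v := by
  rw [fderiv_apply_eq_sum_pd, mink]
  refine Finset.sum_congr rfl fun i _ => ?_
  simp only [mgrad]
  split_ifs <;> ring

/-- Reverse Cauchy–Schwarz inequality. -/
lemma sqrt_neg_mink_le_mink {u w : Fin 2 → ℝ} (hu : mink u u ≤ 0) (hu0 : 0 ≤ u 0)
    (hw : mink w w ≤ -1) (hw0 : w 0 < 0) : √(-mink u u) ≤ mink w u := by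
  simp only [mink_two] at hu hw ⊢
  have hspace : (w 1 * u 1) ^ 2 ≤ (-(w 0 * u 0)) ^ 2 := by
    rw [neg_sq, mul_pow, mul_pow]
    exact mul_le_mul (by linarith) (by linarith) (sq_nonneg _) (sq_nonneg _)
  have htime : 0 ≤ -(w 0 * u 0) := by nlinarith
  have hsq_sub_sq : (-(w 0 * u 0) + w 1 * u 1) ^ 2 - (w 1 * u 0 - w 0 * u 1) ^ 2
      = (w 0 ^ 2 - w 1 ^ 2) * (u 0 ^ 2 - u 1 ^ 2) := by ring
  refine Real.sqrt_le_iff.mpr ⟨?_, ?_⟩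
  · linarith [(abs_le_of_sq_le_sq' hspace htime).1]
  · nlinarith [sq_nonneg (w 1 * u 0 - w 0 * u 1)]

lemma intervalIntegrable_sqrt_neg_mink {n : ℕ} {γ' : ℝ → Fin n → ℝ} {a b : ℝ} (hab : a ≤ b)
    (hγ' : ContinuousOn γ' (Icc a b)) :
    IntervalIntegrable (fun s => √(-mink (γ' s) (γ' s))) volume a b :=
  ContinuousOn.intervalIntegrable_of_Icc hab
    ((Real.continuous_sqrt.comp continuous_mink_self.neg).comp_continuousOn hγ')

lemma integral_le_sub_of_forall_piece_le {k : ℕ} {t : Fin (k + 1) → ℝ} {φ F : ℝ → ℝ}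
    (hφ : ∀ i : Fin k, IntervalIntegrable φ volume (t i.castSucc) (t i.succ))
    (hle : ∀ i : Fin k, ∫ s in t i.castSucc..t i.succ, φ s ≤ F (t i.succ) - F (t i.castSucc)) :
    ∫ s in t 0..t (Fin.last k), φ s ≤ F (t (Fin.last k)) - F (t 0) := by
  suffices ∀ j : Fin (k + 1), IntervalIntegrable φ volume (t 0) (t j) ∧
      ∫ s in t 0..t j, φ s ≤ F (t j) - F (t 0) from (this _).2
  intro j
  induction j using Fin.induction with
  | zero => simp
  | succ i ih =>
    refine ⟨ih.1.trans (hφ i), ?_⟩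
    rw [← intervalIntegral.integral_add_adjacent_intervals ih.1 (hφ i)]
    linarith [ih.2, hle i]

lemma integral_sqrt_neg_mink_le_sub {f : (Fin 2 → ℝ) → ℝ} (hf : ContDiff ℝ 1 f)
    (hsteep : ∀ x, mink (mgrad f x) (mgrad f x) ≤ -1) (hpast : ∀ x, mgrad f x 0 < 0)
    {γ γ' : ℝ → Fin 2 → ℝ} {a b : ℝ} (hab : a ≤ b) (hγ : ContinuousOn γ (Icc a b))
    (hderiv : ∀ s ∈ Ioo a b, HasDerivAt γ (γ' s) s) (hγ' : ContinuousOn γ' (Icc a b))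
    (hcausal : ∀ᵐ s ∂volume.restrict (Icc a b), mink (γ' s) (γ' s) ≤ 0 ∧ 0 ≤ γ' s 0) :
    ∫ s in a..b, √(-mink (γ' s) (γ' s)) ≤ f (γ b) - f (γ a) := by
  have hdf : ContinuousOn (fun s => fderiv ℝ f (γ s) (γ' s)) (Icc a b) :=
    ((hf.continuous_fderiv one_ne_zero).comp_continuousOn hγ).clm_apply hγ'
  calc ∫ s in a..b, √(-mink (γ' s) (γ' s))
      ≤ ∫ s in a..b, fderiv ℝ f (γ s) (γ' s) := by
        refine intervalIntegral.integral_mono_ae_restrict hab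
          (intervalIntegrable_sqrt_neg_mink hab hγ') (hdf.intervalIntegrable_of_Icc hab) ?_
        filter_upwards [hcausal] with s ⟨hs, hs0⟩
        rw [← mink_mgrad_eq_fderiv]
        exact sqrt_neg_mink_le_mink hs hs0 (hsteep _) (hpast _)
    _ = f (γ b) - f (γ a) :=
        intervalIntegral.integral_eq_sub_of_hasDerivAt_of_le hab
          (hf.continuous.comp_continuousOn hγ)
          (fun s hs => (hf.differentiable one_ne_zero (γ s)).hasFDerivAt.comp_hasDerivAt s
            (hderiv s hs))
          (hdf.intervalIntegrable_of_Icc hab)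

theorem stmt3_general (p q : Fin 2 → ℝ)
    (f : (Fin 2 → ℝ) → ℝ) (hf : ContDiff ℝ 1 f)
    (hsteep : ∀ x, mink (mgrad f x) (mgrad f x) ≤ -1)
    (hpast : ∀ x, mgrad f x 0 < 0) :
    ldist p q ≤ max 0 (f q - f p) := by
  refine Real.sSup_le ?_ (le_max_left _ _)
  rintro L (rfl | ⟨γ, γ', ⟨rfl, rfl, hγ, ⟨k, t, ht, ht0, htk, hpiece⟩, hcausal⟩, rfl⟩)
  · exact le_max_left _ _
  have hle : ∀ i : Fin k, t i.castSucc ≤ t i.succ := fun i => ht.monotone i.castSucc_le_succ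
  have hsub : ∀ i : Fin k, Icc (t i.castSucc) (t i.succ) ⊆ Icc 0 1 := fun i =>
    Icc_subset_Icc (ht0 ▸ ht.monotone (Fin.zero_le _)) (htk ▸ ht.monotone (Fin.le_last _))
  have hpartition := integral_le_sub_of_forall_piece_le (F := f ∘ γ)
    (fun i => intervalIntegrable_sqrt_neg_mink (hle i) (hpiece i).2)
    (fun i => integral_sqrt_neg_mink_le_sub hf hsteep hpast (hle i) (hγ.mono (hsub i))
      (hpiece i).1 (hpiece i).2 (ae_restrict_of_ae_restrict_of_subset (hsub i) hcausal))
  rw [ht0, htk] at hpartition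
  exact le_max_of_le_right hpartition

/-- In the 2-dimensional Minkowski space, for `q` in the causal future of `p`,
the Lorentzian distance satisfies `d(p,q) ≤ [f(q) − f(p)]⁺` for every steep `C¹`
function `f`. -/
theorem stmt3 (p q : Fin 2 → ℝ)
    (hpq : ∃ γ γ', IsCausalCurve γ γ' p q)
    (f : (Fin 2 → ℝ) → ℝ) (hf : ContDiff ℝ 1 f)
    (hsteep : ∀ x, mink (mgrad f x) (mgrad f x) ≤ -1)
    (hpast : ∀ x, mgrad f x 0 < 0) :
    ldist p q ≤ max 0 (f q - f p) :=
  stmt3_general p q f hf hsteep hpast
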